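/- arXiv:2104.05266 — 8 statements merged into one kernel-verified Lean document; each statement's English description precedes it below -/
import Mathlib

section
/- Let X and Y be sets, R ⊆ X × Y a correspondence, f : X → EReal, and A ⊆ X a subset. If {x ∈ X | ∃ y ∈ Y, (x, y) ∈ R and ∃ x' ∈ A with (x', y) ∈ R} ⊆ A and A ⊆ dom R, where dom R = {x ∈ X | ∃ y ∈ Y, (x, y) ∈ R}, then inf_{x ∈ A} f(x) = inf_{y ∈ AR} (f|R)(y), where AR = {y ∈ Y | ∃ x ∈ A, (x, y) ∈ R} and both infima are taken in EReal with the convention that the infimum over the empty set is +∞. -/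
/-- If `R R⁻¹ A ⊆ A ⊆ dom R`, then the infimum of `f` over `A` equals the
infimum of the conditional infimum over the afterset `A R`. -/
theorem inf_eq_inf_condInf {X Y : Type*} (R : Set (X × Y)) (f : X → EReal) (A : Set X)
    (hRRA : {x | ∃ y : Y, (x, y) ∈ R ∧ ∃ x' ∈ A, (x', y) ∈ R} ⊆ A)
    (hA : A ⊆ {x | ∃ y : Y, (x, y) ∈ R}) :
    sInf (f '' A) =
      sInf ((fun y => sInf (f '' {x | (x, y) ∈ R})) '' {y | ∃ x ∈ A, (x, y) ∈ R}) := by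
  apply le_antisymm
  · apply le_sInf
    rintro v ⟨y, ⟨x', hx'A, hx'y⟩, rfl⟩
    apply le_sInf
    rintro w ⟨x, hxy, rfl⟩
    exact sInf_le ⟨x, hRRA ⟨y, hxy, x', hx'A, hx'y⟩, rfl⟩
  · apply le_sInf
    rintro v ⟨x, hxA, rfl⟩
    obtain ⟨y, hxy⟩ := hA hxA
    exact le_trans (sInf_le ⟨y, ⟨x, hxA, hxy⟩, rfl⟩) (sInf_le ⟨x, hxy, rfl⟩)
end

section
/- (Transfer of optimal solutions.) Let X be a set, f : X → EReal, and A ⊆ X. Suppose there exist: a set Y, a correspondence R ⊆ X × Y, and a function h : Y → EReal such that h(p) ≤ (f|R)(p) for all p ∈ Y; a subset B ⊆ Y such that A ⊆ RB = {x ∈ X | ∃ p ∈ B, (x, p) ∈ R}; an element p* ∈ B such that h(p*) ≤ h(p) for all p ∈ B; and an element x* ∈ A such that f(x*) = h(p*). Then x* is an optimal solution of the minimization of f over A, that is, x* ∈ A and f(x*) ≤ f(x) for all x ∈ A. -/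
/-- Transfer of optimal solutions via the conditional infimum. -/
theorem transfer_argmin {X Y : Type*} (f : X → EReal) (A : Set X)
    (R : Set (X × Y)) (h : Y → EReal)
    (hh : ∀ p : Y, h p ≤ sInf (f '' {x | (x, p) ∈ R}))
    (B : Set Y) (hAB : A ⊆ {x | ∃ p ∈ B, (x, p) ∈ R})
    (pstar : Y) (hpB : pstar ∈ B) (hpopt : ∀ p ∈ B, h pstar ≤ h p)
    (xstar : X) (hxA : xstar ∈ A) (hfx : f xstar = h pstar) :
    xstar ∈ A ∧ ∀ x ∈ A, f xstar ≤ f x := by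
  refine ⟨hxA, fun x hx => ?_⟩
  obtain ⟨p, hpB', hxp⟩ := hAB hx
  calc f xstar = h pstar := hfx
    _ ≤ h p := hpopt p hpB'
    _ ≤ sInf (f '' {x | (x, p) ∈ R}) := hh p
    _ ≤ f x := sInf_le ⟨x, hxp, rfl⟩
end

section
/- Let d ≥ 1, A a symmetric d×d real matrix, and b ∈ ℝ^d satisfying the ε-condition: there exists ε ∈ {-1, 1}^d such that ε_i b_i ≤ 0 for all i and ε_i ε_j A_{ij} ≤ 0 for all i ≠ j. Let q(u) = ∑_{i,j} A_{ij} u_i u_j + ∑_i b_i u_i and φ(p) = inf {q(u) | u ∈ ℝ^d, u_i² = p_i for all i} (infimum +∞ over the empty set). Then for every p ∈ ℝ^d with p_i ≥ 0 for all i, φ(p) = ∑_i A_{ii} p_i − ∑_{i ≠ j} |A_{ij}| √(p_i p_j) − ∑_i |b_i| √(p_i). -/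
/-!
Writing `q(u)` as its diagonal part, which depends only on `p = s(u)`, plus the off-diagonal and
linear terms, each off-diagonal term `A i j u i u j` and each linear term `b i u i` is at least
minus its absolute value, and these absolute values depend only on `p`. This gives the lower
bound for every `u` in the fibre of `p`. The ε-condition says exactly that the point
`u i = ε i √(p i)` of the fibre makes every one of these terms nonpositive, so that all the bounds
are attained there.
-/

open Finset

theorem Finset.sum_sum_eq_sum_diag_add_sum_offDiag {ι M : Type*} [Fintype ι] [DecidableEq ι]
    [AddCommMonoid M] (f : ι → ι → M) :
    ∑ i, ∑ j, f i j = ∑ i, f i i + ∑ i, ∑ j, (if i = j then 0 else f i j) := by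
  rw [← sum_add_distrib]
  refine sum_congr rfl fun i _ => ?_
  have split : ∀ j, f i j = (if i = j then f i j else 0) + (if i = j then 0 else f i j) :=
    fun j => by split_ifs <;> simp
  rw [sum_congr rfl fun j _ => split j, sum_add_distrib, sum_ite_eq]
  simp

section LinearQuadratic

variable {ι R : Type*} [Fintype ι] [DecidableEq ι] [CommRing R] (A : ι → ι → R) (b u : ι → R)

def lqForm : R := ∑ i, ∑ j, A i j * u i * u j + ∑ i, b i * u i

theorem lqForm_eq_diag_add_offDiag :
    lqForm A b u = ∑ i, A i i * u i ^ 2 + ∑ i, ∑ j, (if i = j then 0 else A i j * u i * u j)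
      + ∑ i, b i * u i := by
  rw [lqForm, sum_sum_eq_sum_diag_add_sum_offDiag]
  simp only [sq, mul_assoc]

variable [LinearOrder R]

def lqMinorant : R :=
  ∑ i, A i i * u i ^ 2 - ∑ i, ∑ j, (if i = j then 0 else |A i j * u i * u j|) - ∑ i, |b i * u i|

variable [IsStrictOrderedRing R]

theorem lqMinorant_le_lqForm : lqMinorant A b u ≤ lqForm A b u := by
  have offDiag : -∑ i, ∑ j, (if i = j then 0 else |A i j * u i * u j|)
      ≤ ∑ i, ∑ j, (if i = j then 0 else A i j * u i * u j) := by
    simp only [← sum_neg_distrib]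
    gcongr with i _ j _
    split_ifs
    · simp
    · exact neg_abs_le _
  have linear : -∑ i, |b i * u i| ≤ ∑ i, b i * u i := by
    rw [← sum_neg_distrib]
    gcongr with i _
    exact neg_abs_le _
  rw [lqMinorant, lqForm_eq_diag_add_offDiag]
  linarith

theorem lqMinorant_eq_lqForm_of_nonpos (hA : ∀ i j, i ≠ j → A i j * u i * u j ≤ 0)
    (hb : ∀ i, b i * u i ≤ 0) : lqMinorant A b u = lqForm A b u := by
  have offDiag : ∀ i j, (if i = j then 0 else |A i j * u i * u j|)
      = -(if i = j then 0 else A i j * u i * u j) := by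
    intro i j
    split_ifs with hij
    · exact neg_zero.symm
    · exact abs_of_nonpos (hA i j hij)
  simp only [lqMinorant, lqForm_eq_diag_add_offDiag, offDiag, abs_of_nonpos (hb _),
    sum_neg_distrib]
  ring

end LinearQuadratic

theorem lqMinorant_eq_of_sq_eq {ι : Type*} [Fintype ι] [DecidableEq ι] (A : ι → ι → ℝ)
    (b u p : ι → ℝ) (hu : ∀ i, u i ^ 2 = p i) :
    lqMinorant A b u = ∑ i, A i i * p i
      - ∑ i, ∑ j, (if i = j then 0 else |A i j| * Real.sqrt (p i * p j))
      - ∑ i, |b i| * Real.sqrt (p i) := by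
  have sqrt_p : ∀ i, Real.sqrt (p i) = |u i| := fun i => by rw [← hu i, Real.sqrt_sq_eq_abs]
  have sqrt_pp : ∀ i j, Real.sqrt (p i * p j) = |u i| * |u j| := fun i j => by
    rw [← hu i, Real.sqrt_mul (sq_nonneg _), Real.sqrt_sq_eq_abs, sqrt_p]
  simp only [lqMinorant, hu, sqrt_p, sqrt_pp, abs_mul, mul_assoc]

theorem terms_nonpos_at_signed_sqrt {ι : Type*} (A : ι → ι → ℝ) (b p ε : ι → ℝ)
    (hεb : ∀ i, ε i * b i ≤ 0) (hεA : ∀ i j, i ≠ j → ε i * ε j * A i j ≤ 0) :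
    (∀ i j, i ≠ j → A i j * (ε i * Real.sqrt (p i)) * (ε j * Real.sqrt (p j)) ≤ 0) ∧
      ∀ i, b i * (ε i * Real.sqrt (p i)) ≤ 0 := by
  refine ⟨fun i j hij => ?_, fun i => ?_⟩
  · calc A i j * (ε i * Real.sqrt (p i)) * (ε j * Real.sqrt (p j))
        = ε i * ε j * A i j * (Real.sqrt (p i) * Real.sqrt (p j)) := by ring
      _ ≤ 0 := mul_nonpos_of_nonpos_of_nonneg (hεA i j hij) (by positivity)
  · calc b i * (ε i * Real.sqrt (p i)) = ε i * b i * Real.sqrt (p i) := by ring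
      _ ≤ 0 := mul_nonpos_of_nonpos_of_nonneg (hεb i) (Real.sqrt_nonneg _)

theorem condInf_quadratic_closed_form_general (d : ℕ)
    (A : Fin d → Fin d → ℝ) (b : Fin d → ℝ)
    (hε : ∃ ε : Fin d → ℝ, (∀ i, ε i = 1 ∨ ε i = -1) ∧
      (∀ i, ε i * b i ≤ 0) ∧ (∀ i j, i ≠ j → ε i * ε j * A i j ≤ 0))
    (q : (Fin d → ℝ) → ℝ)
    (hq : ∀ u, q u = (∑ i, ∑ j, A i j * u i * u j) + ∑ i, b i * u i)
    (φ : (Fin d → ℝ) → EReal)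
    (hφ : ∀ p, φ p = sInf ((fun u => (q u : EReal)) '' {u | ∀ i, (u i) ^ 2 = p i})) :
    ∀ p : Fin d → ℝ, (∀ i, 0 ≤ p i) →
      φ p = (((∑ i, A i i * p i)
          - ∑ i, ∑ j, (if i = j then 0 else |A i j| * Real.sqrt (p i * p j))
          - ∑ i, |b i| * Real.sqrt (p i) : ℝ) : EReal) := by
  intro p hp
  obtain ⟨ε, hε_sign, hεb, hεA⟩ := hε
  set u₀ : Fin d → ℝ := fun i => ε i * Real.sqrt (p i)
  have hu₀ : ∀ i, u₀ i ^ 2 = p i := fun i => by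
    rcases hε_sign i with h | h <;> simp [u₀, h, Real.sq_sqrt (hp i)]
  obtain rfl : q = lqForm A b := funext hq
  obtain ⟨hA₀, hb₀⟩ := terms_nonpos_at_signed_sqrt A b p ε hεb hεA
  rw [hφ, ← lqMinorant_eq_of_sq_eq A b u₀ p hu₀]
  refine IsLeast.csInf_eq ⟨⟨u₀, hu₀, ?_⟩, ?_⟩
  · exact congrArg _ (lqMinorant_eq_lqForm_of_nonpos A b u₀ hA₀ hb₀).symm
  · rintro _ ⟨u, hu, rfl⟩
    rw [lqMinorant_eq_of_sq_eq A b u₀ p hu₀, ← lqMinorant_eq_of_sq_eq A b u p hu]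
    exact EReal.coe_le_coe_iff.mpr (lqMinorant_le_lqForm A b u)

/-- Under the ε-condition, the conditional infimum of a linear-quadratic
function with respect to the square mapping has a closed-form expression on the
nonnegative orthant. -/
theorem condInf_quadratic_closed_form (d : ℕ) (hd : 1 ≤ d)
    (A : Fin d → Fin d → ℝ) (hA : ∀ i j, A i j = A j i) (b : Fin d → ℝ)
    (hε : ∃ ε : Fin d → ℝ, (∀ i, ε i = 1 ∨ ε i = -1) ∧
      (∀ i, ε i * b i ≤ 0) ∧ (∀ i j, i ≠ j → ε i * ε j * A i j ≤ 0))
    (q : (Fin d → ℝ) → ℝ)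
    (hq : ∀ u, q u = (∑ i, ∑ j, A i j * u i * u j) + ∑ i, b i * u i)
    (φ : (Fin d → ℝ) → EReal)
    (hφ : ∀ p, φ p = sInf ((fun u => (q u : EReal)) '' {u | ∀ i, (u i) ^ 2 = p i})) :
    ∀ p : Fin d → ℝ, (∀ i, 0 ≤ p i) →
      φ p = (((∑ i, A i i * p i)
          - ∑ i, ∑ j, (if i = j then 0 else |A i j| * Real.sqrt (p i * p j))
          - ∑ i, |b i| * Real.sqrt (p i) : ℝ) : EReal) :=
  condInf_quadratic_closed_form_general d A b hε q hq φ hφ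
end

section
/- Let d ≥ 1, A a symmetric d×d real matrix, and b ∈ ℝ^d. The real-valued function g(p) = ∑_i A_{ii} p_i − ∑_{i ≠ j} |A_{ij}| √(p_i p_j) − ∑_i |b_i| √(p_i) is convex on the nonnegative orthant {p ∈ ℝ^d | p_i ≥ 0 for all i}. -/
private lemma sqrt_key {x1 x2 y1 y2 : ℝ} (hx1 : 0 ≤ x1) (hx2 : 0 ≤ x2)
    (hy1 : 0 ≤ y1) (hy2 : 0 ≤ y2) :
    Real.sqrt (x1 * y1) + Real.sqrt (x2 * y2) ≤ Real.sqrt ((x1 + x2) * (y1 + y2)) := by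
  have h1 : Real.sqrt (x1 * y1) ^ 2 = x1 * y1 := Real.sq_sqrt (by positivity)
  have h2 : Real.sqrt (x2 * y2) ^ 2 = x2 * y2 := Real.sq_sqrt (by positivity)
  have h3 : Real.sqrt (x1 * y1) * Real.sqrt (x2 * y2) = Real.sqrt (x1 * y1 * (x2 * y2)) :=
    (Real.sqrt_mul (by positivity) _).symm
  have h4 : Real.sqrt (x1 * y1 * (x2 * y2)) ≤ (x1 * y2 + x2 * y1) / 2 := by
    have h5 : x1 * y1 * (x2 * y2) ≤ ((x1 * y2 + x2 * y1) / 2) ^ 2 := by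
      nlinarith [sq_nonneg (x1 * y2 - x2 * y1)]
    have := Real.sqrt_le_sqrt h5
    rwa [Real.sqrt_sq (by positivity)] at this
  have hsq : (Real.sqrt (x1 * y1) + Real.sqrt (x2 * y2)) ^ 2 ≤ (x1 + x2) * (y1 + y2) := by
    nlinarith
  have := Real.sqrt_le_sqrt hsq
  rwa [Real.sqrt_sq (by positivity)] at this

private lemma sqrt_concave2 {t : ℝ} (ht : 0 ≤ t) (ht1 : t ≤ 1)
    {a b c e : ℝ} (ha : 0 ≤ a) (hb : 0 ≤ b) (hc : 0 ≤ c) (he : 0 ≤ e) :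
    t * Real.sqrt (a * b) + (1 - t) * Real.sqrt (c * e) ≤
      Real.sqrt ((t * a + (1 - t) * c) * (t * b + (1 - t) * e)) := by
  have ht' : (0:ℝ) ≤ 1 - t := by linarith
  have e1 : Real.sqrt (t * a * (t * b)) = t * Real.sqrt (a * b) := by
    rw [show t * a * (t * b) = t ^ 2 * (a * b) by ring, Real.sqrt_mul (sq_nonneg t),
      Real.sqrt_sq ht]
  have e2 : Real.sqrt ((1 - t) * c * ((1 - t) * e)) = (1 - t) * Real.sqrt (c * e) := by
    rw [show (1 - t) * c * ((1 - t) * e) = (1 - t) ^ 2 * (c * e) by ring,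
      Real.sqrt_mul (sq_nonneg _), Real.sqrt_sq ht']
  have := sqrt_key (x1 := t * a) (x2 := (1 - t) * c) (y1 := t * b) (y2 := (1 - t) * e)
    (by positivity) (by positivity) (by positivity) (by positivity)
  rwa [e1, e2] at this

private lemma sqrt_concave1 {t : ℝ} (ht : 0 ≤ t) (ht1 : t ≤ 1)
    {a c : ℝ} (ha : 0 ≤ a) (hc : 0 ≤ c) :
    t * Real.sqrt a + (1 - t) * Real.sqrt c ≤ Real.sqrt (t * a + (1 - t) * c) := by
  have h := sqrt_concave2 ht ht1 (b := 1) (e := 1) ha zero_le_one hc zero_le_one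
  simpa using h

/-- The closed-form function is convex on the nonnegative orthant. -/
theorem closed_form_convex (d : ℕ) (hd : 1 ≤ d)
    (A : Fin d → Fin d → ℝ) (hA : ∀ i j, A i j = A j i) (b : Fin d → ℝ)
    (g : (Fin d → ℝ) → ℝ)
    (hg : ∀ p, g p = (∑ i, A i i * p i)
        - (∑ i, ∑ j, (if i = j then 0 else |A i j| * Real.sqrt (p i * p j)))
        - ∑ i, |b i| * Real.sqrt (p i)) :
    ∀ p q : Fin d → ℝ, (∀ i, 0 ≤ p i) → (∀ i, 0 ≤ q i) →
      ∀ t : ℝ, 0 ≤ t → t ≤ 1 →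
        g (fun i => t * p i + (1 - t) * q i) ≤ t * g p + (1 - t) * g q := by
  intro p q hp hq t ht ht1
  rw [hg, hg, hg]
  have hL : (∑ i, A i i * (t * p i + (1 - t) * q i)) =
      t * (∑ i, A i i * p i) + (1 - t) * (∑ i, A i i * q i) := by
    rw [Finset.mul_sum, Finset.mul_sum, ← Finset.sum_add_distrib]
    exact Finset.sum_congr rfl fun i _ => by ring
  have hS2 : t * (∑ i, ∑ j, (if i = j then 0 else |A i j| * Real.sqrt (p i * p j)))
      + (1 - t) * (∑ i, ∑ j, (if i = j then 0 else |A i j| * Real.sqrt (q i * q j)))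
      ≤ ∑ i, ∑ j, (if i = j then 0 else
          |A i j| * Real.sqrt ((t * p i + (1 - t) * q i) * (t * p j + (1 - t) * q j))) := by
    rw [Finset.mul_sum, Finset.mul_sum, ← Finset.sum_add_distrib]
    apply Finset.sum_le_sum
    intro i _
    rw [Finset.mul_sum, Finset.mul_sum, ← Finset.sum_add_distrib]
    apply Finset.sum_le_sum
    intro j _
    by_cases h : i = j
    · simp [h]
    · simp only [if_neg h]
      have hkey := sqrt_concave2 ht ht1 (hp i) (hp j) (hq i) (hq j)
      calc t * (|A i j| * Real.sqrt (p i * p j))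
            + (1 - t) * (|A i j| * Real.sqrt (q i * q j))
          = |A i j| * (t * Real.sqrt (p i * p j) + (1 - t) * Real.sqrt (q i * q j)) := by ring
        _ ≤ |A i j| * Real.sqrt ((t * p i + (1 - t) * q i) * (t * p j + (1 - t) * q j)) :=
            mul_le_mul_of_nonneg_left hkey (abs_nonneg _)
  have hS1 : t * (∑ i, |b i| * Real.sqrt (p i)) + (1 - t) * (∑ i, |b i| * Real.sqrt (q i))
      ≤ ∑ i, |b i| * Real.sqrt (t * p i + (1 - t) * q i) := by
    rw [Finset.mul_sum, Finset.mul_sum, ← Finset.sum_add_distrib]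
    apply Finset.sum_le_sum
    intro i _
    have hkey := sqrt_concave1 ht ht1 (hp i) (hq i)
    calc t * (|b i| * Real.sqrt (p i)) + (1 - t) * (|b i| * Real.sqrt (q i))
        = |b i| * (t * Real.sqrt (p i) + (1 - t) * Real.sqrt (q i)) := by ring
      _ ≤ |b i| * Real.sqrt (t * p i + (1 - t) * q i) :=
          mul_le_mul_of_nonneg_left hkey (abs_nonneg _)
  linarith
end

section
/- (Hidden convexity in linear-quadratic minimization.) Let d ≥ 1, let C ⊆ ℝ^d be a convex subset of the nonnegative orthant, let A be a symmetric d×d real matrix and b ∈ ℝ^d satisfying the ε-condition: there exists ε ∈ {-1, 1}^d with ε_i b_i ≤ 0 for all i and ε_i ε_j A_{ij} ≤ 0 for all i ≠ j. Then inf {∑_{i,j} A_{ij} u_i u_j + ∑_i b_i u_i | u ∈ ℝ^d, (u_1², …, u_d²) ∈ C} = inf {∑_i A_{ii} p_i − ∑_{i ≠ j} |A_{ij}| √(p_i p_j) − ∑_i |b_i| √(p_i) | p ∈ C}, where both infima are taken in EReal with the convention that the infimum over the empty set is +∞. -/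
/-- Hidden convexity in linear-quadratic minimization under the ε-condition. -/
theorem quadratic_hidden_convexity (d : ℕ) (hd : 1 ≤ d)
    (C : Set (Fin d → ℝ)) (hC : Convex ℝ C) (hCpos : ∀ p ∈ C, ∀ i, 0 ≤ p i)
    (A : Fin d → Fin d → ℝ) (hA : ∀ i j, A i j = A j i) (b : Fin d → ℝ)
    (hε : ∃ ε : Fin d → ℝ, (∀ i, ε i = 1 ∨ ε i = -1) ∧
      (∀ i, ε i * b i ≤ 0) ∧ (∀ i j, i ≠ j → ε i * ε j * A i j ≤ 0)) :
    sInf ((fun u => (((∑ i, ∑ j, A i j * u i * u j) + ∑ i, b i * u i : ℝ) : EReal)) ''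
        {u : Fin d → ℝ | (fun i => (u i) ^ 2) ∈ C}) =
    sInf ((fun p => (((∑ i, A i i * p i)
        - (∑ i, ∑ j, (if i = j then 0 else |A i j| * Real.sqrt (p i * p j)))
        - ∑ i, |b i| * Real.sqrt (p i) : ℝ) : EReal)) '' C) := by
  obtain ⟨ε, hε1, hεb, hεA⟩ := hε
  have hεsq : ∀ i, ε i * ε i = 1 := by
    intro i; rcases hε1 i with h | h <;> rw [h] <;> norm_num
  have hεabs : ∀ i, |ε i| = 1 := by
    intro i; rcases hε1 i with h | h <;> rw [h] <;> norm_num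
  apply le_antisymm
  · -- sInf LHS ≤ sInf RHS : each RHS value is attained on the LHS
    apply le_sInf
    rintro x ⟨p, hp, rfl⟩
    apply sInf_le
    have hppos : ∀ i, 0 ≤ p i := hCpos p hp
    refine ⟨fun i => ε i * Real.sqrt (p i), ?_, ?_⟩
    · show (fun i => (ε i * Real.sqrt (p i)) ^ 2) ∈ C
      convert hp using 1
      funext i
      rw [mul_pow, Real.sq_sqrt (hppos i)]
      rcases hε1 i with h | h <;> rw [h] <;> ring
    · congr 1
      have key : ∀ i j, A i j * (ε i * Real.sqrt (p i)) * (ε j * Real.sqrt (p j))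
          = (if i = j then A i i * p i else 0)
            - (if i = j then 0 else |A i j| * Real.sqrt (p i * p j)) := by
        intro i j
        by_cases h : i = j
        · subst h
          rw [if_pos rfl, if_pos rfl, sub_zero]
          have h1 : Real.sqrt (p i) * Real.sqrt (p i) = p i :=
            Real.mul_self_sqrt (hppos i)
          calc A i i * (ε i * Real.sqrt (p i)) * (ε i * Real.sqrt (p i))
              = A i i * ((ε i * ε i) * (Real.sqrt (p i) * Real.sqrt (p i))) := by ring
            _ = A i i * p i := by rw [hεsq, h1]; ring
        · rw [if_neg h, if_neg h, zero_sub]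
          have hneg : ε i * ε j * A i j = -|A i j| := by
            have h1 := hεA i j h
            have h2 : |ε i * ε j * A i j| = |A i j| := by
              rw [abs_mul, abs_mul, hεabs, hεabs]; ring
            have := abs_of_nonpos h1
            linarith [h2, this]
          have hs : Real.sqrt (p i * p j) = Real.sqrt (p i) * Real.sqrt (p j) :=
            Real.sqrt_mul (hppos i) _
          calc A i j * (ε i * Real.sqrt (p i)) * (ε j * Real.sqrt (p j))
              = (ε i * ε j * A i j) * (Real.sqrt (p i) * Real.sqrt (p j)) := by ring
            _ = -(|A i j| * Real.sqrt (p i * p j)) := by rw [hneg, hs]; ring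
      have keyb : ∀ i, b i * (ε i * Real.sqrt (p i)) = -(|b i| * Real.sqrt (p i)) := by
        intro i
        have h1 := hεb i
        have h2 : |ε i * b i| = |b i| := by rw [abs_mul, hεabs]; ring
        have h3 : ε i * b i = -|b i| := by
          have := abs_of_nonpos h1; linarith [h2, this]
        calc b i * (ε i * Real.sqrt (p i)) = (ε i * b i) * Real.sqrt (p i) := by ring
          _ = -(|b i| * Real.sqrt (p i)) := by rw [h3]; ring
      simp only [key, keyb, Finset.sum_sub_distrib, Finset.sum_neg_distrib,
        Finset.sum_ite_eq, Finset.mem_univ, if_true]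
      ring
  · -- sInf RHS ≤ sInf LHS : each LHS value dominates some RHS value
    apply le_sInf
    rintro x ⟨u, hu, rfl⟩
    refine sInf_le_of_le ⟨fun i => (u i) ^ 2, hu, rfl⟩ ?_
    rw [EReal.coe_le_coe_iff]
    have e1 : ∀ i j : Fin d, Real.sqrt ((u i) ^ 2 * (u j) ^ 2) = |u i| * |u j| := by
      intro i j; rw [← mul_pow, Real.sqrt_sq_eq_abs, abs_mul]
    have e2 : ∀ i : Fin d, Real.sqrt ((u i) ^ 2) = |u i| := fun i => Real.sqrt_sq_eq_abs _
    simp only [e1, e2]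
    have hsum1 : ∑ i, ∑ j, ((if i = j then A i i * (u i) ^ 2 else 0)
        - (if i = j then 0 else |A i j| * (|u i| * |u j|)))
        ≤ ∑ i, ∑ j, A i j * u i * u j := by
      refine Finset.sum_le_sum fun i _ => Finset.sum_le_sum fun j _ => ?_
      by_cases h : i = j
      · subst h; rw [if_pos rfl, if_pos rfl, sub_zero]; apply le_of_eq; ring
      · rw [if_neg h, if_neg h, zero_sub]
        calc -(|A i j| * (|u i| * |u j|)) = -|A i j * u i * u j| := by
              rw [abs_mul, abs_mul]; ring
          _ ≤ A i j * u i * u j := neg_abs_le _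
    have hsum2 : ∑ i, -(|b i| * |u i|) ≤ ∑ i, b i * u i := by
      refine Finset.sum_le_sum fun i _ => ?_
      calc -(|b i| * |u i|) = -|b i * u i| := by rw [abs_mul]
        _ ≤ b i * u i := neg_abs_le _
    simp only [Finset.sum_sub_distrib, Finset.sum_neg_distrib, Finset.sum_ite_eq,
      Finset.mem_univ, if_true] at hsum1 hsum2 ⊢
    linarith
end

section
/- Let d ≥ 1, let C ⊆ ℝ^d be a convex subset of the nonnegative orthant, and let A be a symmetric d×d real matrix and b ∈ ℝ^d such that there exists ε ∈ {-1, 1}^d with ε_i b_i ≤ 0 for all i and ε_i ε_j A_{ij} ≤ 0 for all i ≠ j. Set g(p) = ∑_i A_{ii} p_i − ∑_{i ≠ j} |A_{ij}| √(p_i p_j) − ∑_i |b_i| √(p_i) and q(u) = ∑_{i,j} A_{ij} u_i u_j + ∑_i b_i u_i. If p* ∈ C satisfies g(p*) ≤ g(p) for all p ∈ C, then the vector u* defined by u*_i = ε_i √(p*_i) satisfies (u*_1², …, u*_d²) ∈ C and q(u*) ≤ q(u) for every u ∈ ℝ^d with (u_1², …, u_d²) ∈ C. -/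
/-- Transfer of minimizers for the linear-quadratic problem under the ε-condition. -/
theorem quadratic_argmin_transfer (d : ℕ) (hd : 1 ≤ d)
    (C : Set (Fin d → ℝ)) (hC : Convex ℝ C) (hCpos : ∀ p ∈ C, ∀ i, 0 ≤ p i)
    (A : Fin d → Fin d → ℝ) (hA : ∀ i j, A i j = A j i) (b : Fin d → ℝ)
    (ε : Fin d → ℝ) (hε1 : ∀ i, ε i = 1 ∨ ε i = -1)
    (hεb : ∀ i, ε i * b i ≤ 0) (hεA : ∀ i j, i ≠ j → ε i * ε j * A i j ≤ 0)
    (g : (Fin d → ℝ) → ℝ)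
    (hg : ∀ p, g p = (∑ i, A i i * p i)
        - (∑ i, ∑ j, (if i = j then 0 else |A i j| * Real.sqrt (p i * p j)))
        - ∑ i, |b i| * Real.sqrt (p i))
    (q : (Fin d → ℝ) → ℝ)
    (hq : ∀ u, q u = (∑ i, ∑ j, A i j * u i * u j) + ∑ i, b i * u i)
    (pstar : Fin d → ℝ) (hpC : pstar ∈ C) (hpopt : ∀ p ∈ C, g pstar ≤ g p) :
    (fun i => ((ε i * Real.sqrt (pstar i)) ^ 2)) ∈ C ∧
    ∀ u : Fin d → ℝ, (fun i => (u i) ^ 2) ∈ C →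
      q (fun i => ε i * Real.sqrt (pstar i)) ≤ q u := by
  have hp : ∀ i, 0 ≤ pstar i := hCpos pstar hpC
  have hεabs : ∀ i, |ε i| = 1 := fun i => by rcases hε1 i with h | h <;> simp [h]
  have hεsq : ∀ i, ε i * ε i = 1 := fun i => by rcases hε1 i with h | h <;> simp [h]
  have hustar : (fun i => ((ε i * Real.sqrt (pstar i)) ^ 2)) = pstar := by
    funext i
    rw [mul_pow, sq (ε i), hεsq i, one_mul, Real.sq_sqrt (hp i)]
  -- general inequality: g (v²) ≤ q v
  have key : ∀ v : Fin d → ℝ, g (fun i => v i ^ 2) ≤ q v := by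
    intro v
    rw [hg, hq]

    have h2 : (∑ i, A i i * (v i) ^ 2)
        - (∑ i, ∑ j, if i = j then 0 else |A i j| * Real.sqrt ((v i) ^ 2 * (v j) ^ 2))
        ≤ ∑ i, ∑ j, A i j * v i * v j := by
      have hdiag : (∑ i, A i i * (v i) ^ 2)
          = ∑ i, ∑ j, (if i = j then A i j * v i * v j else 0) := by
        refine Finset.sum_congr rfl fun i _ => ?_
        rw [Finset.sum_ite_eq]
        simp [sq]
        ring
      rw [hdiag, ← Finset.sum_sub_distrib]
      refine Finset.sum_le_sum fun i _ => ?_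
      rw [← Finset.sum_sub_distrib]
      refine Finset.sum_le_sum fun j _ => ?_
      by_cases h : i = j
      · simp [h]
      · simp only [if_neg h, zero_sub]
        have hs : Real.sqrt ((v i) ^ 2 * (v j) ^ 2) = |v i| * |v j| := by
          rw [Real.sqrt_mul (sq_nonneg _), Real.sqrt_sq_eq_abs, Real.sqrt_sq_eq_abs]
        rw [hs]
        calc -(|A i j| * (|v i| * |v j|)) = -|A i j * v i * v j| := by
              rw [abs_mul, abs_mul]; ring
          _ ≤ A i j * v i * v j := neg_abs_le _
    have h3 : -(∑ i, |b i| * Real.sqrt ((v i) ^ 2)) ≤ ∑ i, b i * v i := by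
      rw [← Finset.sum_neg_distrib]
      refine Finset.sum_le_sum fun i _ => ?_
      rw [Real.sqrt_sq_eq_abs, ← abs_mul]
      exact neg_abs_le _
    linarith
  -- equality at the candidate minimizer
  have heq : q (fun i => ε i * Real.sqrt (pstar i)) = g pstar := by
    rw [hq, hg]

    have hquad : (∑ i, ∑ j, A i j * (ε i * Real.sqrt (pstar i)) * (ε j * Real.sqrt (pstar j)))
        = (∑ i, A i i * pstar i)
          - ∑ i, ∑ j, (if i = j then 0 else |A i j| * Real.sqrt (pstar i * pstar j)) := by
      have hdiag : (∑ i, A i i * pstar i)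
          = ∑ i, ∑ j, (if i = j then A i j * pstar i else 0) := by
        refine Finset.sum_congr rfl fun i _ => ?_
        rw [Finset.sum_ite_eq]
        simp
      rw [hdiag, ← Finset.sum_sub_distrib]
      refine Finset.sum_congr rfl fun i _ => ?_
      rw [← Finset.sum_sub_distrib]
      refine Finset.sum_congr rfl fun j _ => ?_
      by_cases h : i = j
      · subst h
        simp only [if_pos, sub_zero, eq_self_iff_true, if_true]
        rw [show A i i * (ε i * Real.sqrt (pstar i)) * (ε i * Real.sqrt (pstar i))
            = A i i * ((ε i * ε i) * (Real.sqrt (pstar i) * Real.sqrt (pstar i))) by ring,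
          hεsq i, Real.mul_self_sqrt (hp i), one_mul]
      · simp only [if_neg h, zero_sub]
        have habs : |A i j| = -(ε i * ε j * A i j) := by
          have h1 : |ε i * ε j * A i j| = |A i j| := by
            rw [abs_mul, abs_mul, hεabs, hεabs, one_mul, one_mul]
          rw [← h1, abs_of_nonpos (hεA i j h)]
        rw [habs, Real.sqrt_mul (hp i)]
        ring
    have hlin : (∑ i, b i * (ε i * Real.sqrt (pstar i)))
        = -(∑ i, |b i| * Real.sqrt (pstar i)) := by
      rw [← Finset.sum_neg_distrib]
      refine Finset.sum_congr rfl fun i _ => ?_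
      have habs : |b i| = -(ε i * b i) := by
        have h1 : |ε i * b i| = |b i| := by rw [abs_mul, hεabs, one_mul]
        rw [← h1, abs_of_nonpos (hεb i)]
      rw [habs]
      ring
    rw [hquad, hlin]
    ring
  refine ⟨by rw [hustar]; exact hpC, fun u hu => ?_⟩
  calc q (fun i => ε i * Real.sqrt (pstar i)) = g pstar := heq
    _ ≤ g (fun i => u i ^ 2) := hpopt _ hu
    _ ≤ q u := key u
end

section
/- Let d ≥ 1, let C ⊆ ℝ^d be a convex subset of the nonnegative orthant, and let M be a symmetric d×d real matrix with M_{ij} ≥ 0 for all i ≠ j. Then sup {∑_{i,j} M_{ij} u_i u_j | u ∈ ℝ^d, (u_1², …, u_d²) ∈ C} = sup {∑_i M_{ii} p_i + ∑_{i ≠ j} M_{ij} √(p_i p_j) | p ∈ C}, where both suprema are taken in EReal with the convention that the supremum over the empty set is −∞. -/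
/-- Hidden convexity for maximizing a quadratic form with nonnegative
off-diagonal entries. -/
theorem quadratic_form_hidden_convexity_sup (d : ℕ) (hd : 1 ≤ d)
    (C : Set (Fin d → ℝ)) (hC : Convex ℝ C) (hCpos : ∀ p ∈ C, ∀ i, 0 ≤ p i)
    (M : Fin d → Fin d → ℝ) (hM : ∀ i j, M i j = M j i)
    (hMpos : ∀ i j, i ≠ j → 0 ≤ M i j) :
    sSup ((fun u => ((∑ i, ∑ j, M i j * u i * u j : ℝ) : EReal)) ''
        {u : Fin d → ℝ | (fun i => (u i) ^ 2) ∈ C}) =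
    sSup ((fun p => (((∑ i, M i i * p i)
        + ∑ i, ∑ j, (if i = j then 0 else M i j * Real.sqrt (p i * p j)) : ℝ) : EReal)) ''
        C) := by
  have hrw : ∀ q : Fin d → ℝ, (∑ i, M i i * q i : ℝ)
      = ∑ i, ∑ j, (if i = j then M i i * q i else 0) := by
    intro q
    refine Finset.sum_congr rfl fun i _ => ?_
    simp
  apply le_antisymm
  · refine sSup_le ?_
    rintro x ⟨u, hu, rfl⟩
    refine le_trans ?_ (le_sSup ⟨fun i => (u i) ^ 2, hu, rfl⟩)
    have h : (∑ i, ∑ j, M i j * u i * u j : ℝ) ≤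
        (∑ i, M i i * (u i) ^ 2) +
          ∑ i, ∑ j, (if i = j then 0 else M i j * Real.sqrt ((u i) ^ 2 * (u j) ^ 2)) := by
      rw [hrw (fun i => (u i) ^ 2), ← Finset.sum_add_distrib]
      refine Finset.sum_le_sum fun i _ => ?_
      rw [← Finset.sum_add_distrib]
      refine Finset.sum_le_sum fun j _ => ?_
      by_cases hij : i = j
      · subst hij; simp [sq, mul_assoc]
      · simp only [hij, if_false, zero_add]
        have hs : Real.sqrt ((u i) ^ 2 * (u j) ^ 2) = |u i| * |u j| := by
          rw [Real.sqrt_mul (sq_nonneg _), Real.sqrt_sq_eq_abs, Real.sqrt_sq_eq_abs]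
        rw [hs, mul_assoc]
        refine mul_le_mul_of_nonneg_left ?_ (hMpos i j hij)
        calc u i * u j ≤ |u i * u j| := le_abs_self _
          _ = |u i| * |u j| := abs_mul _ _
    dsimp only
    exact_mod_cast h
  · refine sSup_le ?_
    rintro x ⟨p, hp, rfl⟩
    have hpn : ∀ i, 0 ≤ p i := hCpos p hp
    refine le_sSup ⟨fun i => Real.sqrt (p i), ?_, ?_⟩
    · show (fun i => (Real.sqrt (p i)) ^ 2) ∈ C
      have : (fun i => (Real.sqrt (p i)) ^ 2) = p :=
        funext fun i => Real.sq_sqrt (hpn i)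
      rw [this]; exact hp
    · dsimp only
      norm_cast
      rw [hrw p, ← Finset.sum_add_distrib]
      refine Finset.sum_congr rfl fun i _ => ?_
      rw [← Finset.sum_add_distrib]
      refine Finset.sum_congr rfl fun j _ => ?_
      by_cases hij : i = j
      · subst hij
        simp [mul_assoc, Real.mul_self_sqrt (hpn i)]
      · simp only [hij, if_false, zero_add]
        rw [mul_assoc, Real.sqrt_mul (hpn i)]
end

section
/- Let d ≥ 1, let a, σ ∈ ℝ^d (the diagonal entries of diagonal matrices A and S), let b ∈ ℝ^d, and let l ≤ r be real numbers. Then inf {∑_i a_i u_i² + ∑_i b_i u_i | u ∈ ℝ^d, l ≤ ∑_i σ_i u_i² ≤ r} = inf {∑_i a_i p_i − ∑_i |b_i| √(p_i) | p ∈ ℝ^d, p_i ≥ 0 for all i, l ≤ ∑_i σ_i p_i ≤ r}, where both infima are taken in EReal with the convention that the infimum over the empty set is +∞; the right-hand problem is a convex minimization problem. -/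
/-- Hidden convexity for a diagonal linear-quadratic problem with a two-sided
diagonal quadratic constraint. -/
theorem diagonal_quadratic_hidden_convexity (d : ℕ) (hd : 1 ≤ d)
    (a σ b : Fin d → ℝ) (l r : ℝ) (hlr : l ≤ r) :
    sInf ((fun u => (((∑ i, a i * (u i) ^ 2) + ∑ i, b i * u i : ℝ) : EReal)) ''
        {u : Fin d → ℝ | l ≤ ∑ i, σ i * (u i) ^ 2 ∧ ∑ i, σ i * (u i) ^ 2 ≤ r}) =
    sInf ((fun p => (((∑ i, a i * p i) - ∑ i, |b i| * Real.sqrt (p i) : ℝ) : EReal)) ''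
        {p : Fin d → ℝ | (∀ i, 0 ≤ p i) ∧ l ≤ ∑ i, σ i * p i ∧ ∑ i, σ i * p i ≤ r}) := by
  apply le_antisymm
  · apply le_sInf
    rintro x ⟨p, ⟨hp, hl, hr⟩, rfl⟩
    set u : Fin d → ℝ := fun i => if 0 ≤ b i then -Real.sqrt (p i) else Real.sqrt (p i)
      with hu
    have hsq : ∀ i, (u i) ^ 2 = p i := by
      intro i; by_cases h : 0 ≤ b i <;> simp [hu, h, Real.sq_sqrt (hp i)]
    have hbu : ∀ i, b i * u i = -(|b i| * Real.sqrt (p i)) := by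
      intro i; by_cases h : 0 ≤ b i
      · simp only [hu, if_pos h, abs_of_nonneg h]; ring
      · simp only [hu, if_neg h, abs_of_neg (lt_of_not_ge h)]; ring
    apply sInf_le
    refine ⟨u, ⟨by simpa [hsq] using hl, by simpa [hsq] using hr⟩, ?_⟩
    have : (∑ i, a i * (u i) ^ 2) + ∑ i, b i * u i
        = (∑ i, a i * p i) - ∑ i, |b i| * Real.sqrt (p i) := by
      simp only [hsq, hbu, Finset.sum_neg_distrib, sub_eq_add_neg]
    exact congrArg (fun t : ℝ => (t : EReal)) this
  · apply le_sInf
    rintro x ⟨u, ⟨hl, hr⟩, rfl⟩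
    refine le_trans (sInf_le ⟨fun i => (u i) ^ 2, ⟨fun i => sq_nonneg _, hl, hr⟩, rfl⟩) ?_
    have key : (∑ i, a i * (u i) ^ 2) - ∑ i, |b i| * Real.sqrt ((u i) ^ 2)
        ≤ (∑ i, a i * (u i) ^ 2) + ∑ i, b i * u i := by
      have : ∀ i, -(|b i| * Real.sqrt ((u i) ^ 2)) ≤ b i * u i := by
        intro i
        rw [Real.sqrt_sq_eq_abs, ← abs_mul]
        exact neg_abs_le _
      have := Finset.sum_le_sum (s := Finset.univ) (fun i _ => this i)
      simp only [Finset.sum_neg_distrib] at this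
      linarith
    exact EReal.coe_le_coe_iff.2 key
end
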